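/- arXiv:2104.11901 — 2 statements merged into one kernel-verified Lean document; each statement's English description precedes it below -/
import Mathlib

section
/- Let A and B be closed convex cones in ℝ^n such that A ∩ (−B) = {0}. Then the Minkowski sum A + B is closed in ℝ^n. -/
open Pointwise

/-- If `A` and `B` are closed convex cones in `ℝ^n` with
`A ∩ (−B) = {0}`, then the Minkowski sum `A + B` is closed. -/
theorem closed_sum_of_closed_convex_cones (n : ℕ)
    (A B : Set (EuclideanSpace ℝ (Fin n)))
    (hAadd : ∀ x ∈ A, ∀ y ∈ A, x + y ∈ A)
    (hAsmul : ∀ c : ℝ, 0 ≤ c → ∀ x ∈ A, c • x ∈ A)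
    (hBadd : ∀ x ∈ B, ∀ y ∈ B, x + y ∈ B)
    (hBsmul : ∀ c : ℝ, 0 ≤ c → ∀ x ∈ B, c • x ∈ B)
    (hAcl : IsClosed A) (hBcl : IsClosed B)
    (hAB : A ∩ (-B) = {0}) :
    IsClosed (A + B) := by
  classical
  -- Key uniform bound
  have key : ∃ C : ℝ, 0 ≤ C ∧ ∀ a ∈ A, ∀ b ∈ B, ‖a‖ ≤ C * ‖a + b‖ := by
    by_contra h
    push_neg at h
    have h' : ∀ k : ℕ, ∃ a ∈ A, ∃ b ∈ B, ((k : ℝ) + 1) * ‖a + b‖ < ‖a‖ := by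
      intro k
      obtain ⟨a, ha, b, hb, hlt⟩ := h ((k : ℝ) + 1) (by positivity)
      exact ⟨a, ha, b, hb, by linarith⟩
    choose a ha b hb hlt using h'
    have hpos : ∀ k, 0 < ‖a k‖ := by
      intro k
      have := hlt k
      nlinarith [norm_nonneg (a k + b k), norm_nonneg (a k), this,
        mul_nonneg (by positivity : (0:ℝ) ≤ (k:ℝ) + 1) (norm_nonneg (a k + b k))]
    set u : ℕ → EuclideanSpace ℝ (Fin n) := fun k => ‖a k‖⁻¹ • a k with hu
    set v : ℕ → EuclideanSpace ℝ (Fin n) := fun k => ‖a k‖⁻¹ • b k with hv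
    have hu1 : ∀ k, ‖u k‖ = 1 := by
      intro k
      simp only [hu, norm_smul, norm_inv, norm_norm]
      exact inv_mul_cancel₀ (ne_of_gt (hpos k))
    have huA : ∀ k, u k ∈ A := fun k =>
      hAsmul _ (inv_nonneg.mpr (norm_nonneg _)) _ (ha k)
    have hvB : ∀ k, v k ∈ B := fun k =>
      hBsmul _ (inv_nonneg.mpr (norm_nonneg _)) _ (hb k)
    have hsum : Filter.Tendsto (fun k => u k + v k) Filter.atTop (nhds 0) := by
      apply squeeze_zero_norm (a := fun k : ℕ => 1 / ((k : ℝ) + 1)) ?_ tendsto_one_div_add_atTop_nhds_zero_nat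
      intro k
      have huv : u k + v k = ‖a k‖⁻¹ • (a k + b k) := by
        simp [hu, hv, smul_add]
      rw [huv, norm_smul, norm_inv, norm_norm, inv_mul_eq_div]
      rw [div_le_div_iff₀ (hpos k) (by positivity)]
      have := hlt k
      nlinarith [this]
    obtain ⟨z, hz, φ, hφ, hzt⟩ := (isCompact_sphere (0 : EuclideanSpace ℝ (Fin n)) 1).tendsto_subseq
      (fun k => (mem_sphere_zero_iff_norm).mpr (hu1 k))
    have hzA : z ∈ A := hAcl.isSeqClosed (fun k => huA (φ k)) hzt
    have hvt : Filter.Tendsto (fun k => v (φ k)) Filter.atTop (nhds (-z)) := by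
      have h1 : Filter.Tendsto (fun k => u (φ k) + v (φ k)) Filter.atTop (nhds 0) :=
        hsum.comp hφ.tendsto_atTop
      have h2 := h1.sub hzt
      simpa using h2
    have hnzB : -z ∈ B := hBcl.isSeqClosed (fun k => hvB (φ k)) hvt
    have : z ∈ A ∩ (-B) := ⟨hzA, Set.mem_neg.mpr hnzB⟩
    rw [hAB] at this
    have hz1 : ‖z‖ = 1 := mem_sphere_zero_iff_norm.mp hz
    rw [Set.mem_singleton_iff] at this
    rw [this] at hz1
    simp at hz1
  obtain ⟨C, hC0, hC⟩ := key
  apply IsSeqClosed.isClosed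
  intro x z hx hxz
  have hx' : ∀ k, ∃ a ∈ A, ∃ b ∈ B, a + b = x k := fun k => Set.mem_add.mp (hx k)
  choose a ha b hb heq using hx'
  obtain ⟨M, hM⟩ := hxz.norm.bddAbove_range
  have hball : ∀ k, a k ∈ Metric.closedBall (0 : EuclideanSpace ℝ (Fin n)) (C * M) := by
    intro k
    rw [Metric.mem_closedBall, dist_zero_right]
    calc ‖a k‖ ≤ C * ‖a k + b k‖ := hC _ (ha k) _ (hb k)
      _ = C * ‖x k‖ := by rw [heq]
      _ ≤ C * M := by
          apply mul_le_mul_of_nonneg_left _ hC0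
          exact hM ⟨k, rfl⟩
  obtain ⟨α, hα, φ, hφ, hαt⟩ :=
    (isCompact_closedBall (0 : EuclideanSpace ℝ (Fin n)) (C * M)).tendsto_subseq hball
  have hαA : α ∈ A := hAcl.isSeqClosed (fun k => ha (φ k)) hαt
  have hβt : Filter.Tendsto (fun k => b (φ k)) Filter.atTop (nhds (z - α)) := by
    have h1 : Filter.Tendsto (fun k => x (φ k)) Filter.atTop (nhds z) :=
      hxz.comp hφ.tendsto_atTop
    have h2 := h1.sub hαt
    refine h2.congr fun k => ?_
    simp only [Function.comp]
    rw [← heq (φ k)]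
    abel
  have hβB : z - α ∈ B := hBcl.isSeqClosed (fun k => hb (φ k)) hβt
  have : α + (z - α) ∈ A + B := Set.add_mem_add hαA hβB
  simpa using this
end

section
/- Let n ≥ 0 be an integer and consider the lattice ℤs ⊕ ℤf with bilinear form (s,s) = −n, (s,f) = 1, (f,f) = 0. Suppose there exist classes L = a₁s + b₁f and M = a₂s + b₂f, each with self-intersection 0, each with nonnegative intersection against both s and f, and such that L + M is not an integer multiple of f. Then n = 0. -/
/-- in the lattice `ℤs ⊕ ℤf` with form `(s,s) = -n`, `(s,f) = 1`,
`(f,f) = 0`, `n ≥ 0`, if `L = a₁s + b₁f` and `M = a₂s + b₂f` have square zero,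
are nonnegative against `s` and `f`, and `L + M` is not an integer multiple of
`f`, then `n = 0`. -/
theorem hirzebruch_two_rulings_force_n_zero
    (n a₁ b₁ a₂ b₂ : ℤ) (hn : 0 ≤ n)
    (hLL : -n * a₁ ^ 2 + 2 * a₁ * b₁ = 0)
    (hMM : -n * a₂ ^ 2 + 2 * a₂ * b₂ = 0)
    (hLs : -n * a₁ + b₁ ≥ 0) (hLf : a₁ ≥ 0)
    (hMs : -n * a₂ + b₂ ≥ 0) (hMf : a₂ ≥ 0)
    (hLM : ¬ ∃ k : ℤ, (a₁ + a₂, b₁ + b₂) = ((0 : ℤ), k)) :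
    n = 0 := by
  have ha : a₁ + a₂ ≠ 0 := by
    intro h
    exact hLM ⟨b₁ + b₂, by simp [h]⟩
  have hpos : 0 < a₁ ∨ 0 < a₂ := by
    rcases lt_or_eq_of_le hLf with h1 | h1
    · exact Or.inl h1
    rcases lt_or_eq_of_le hMf with h2 | h2
    · exact Or.inr h2
    exact absurd (by omega) ha
  rcases hpos with h | h
  · nlinarith
  · nlinarith
end
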